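/- Let H ∈ (0,1) and R > 0. Then ∫₀^R dx ∫₀^x dy e^{−φ_H(x,y)} ≤ (1/(4H)) · ∫₀^{π/4} (φ_H(cos θ, sin θ))^{−1/(2H)} · γ( 1/(2H), 2^{2H}·R^{4H}·φ_H(cos θ, sin θ) ) dθ. -/

import Mathlib

/-!
In polar coordinates `(x, y) = (r cos θ, r sin θ)` the triangle `0 < y ≤ x ≤ R` lies in
`0 < r ≤ √2 R`, `0 < θ ≤ π/4`, and `φ_H` is homogeneous of degree `4H`, so the inner integral
becomes `∫₀^{√2 R} r e^{-r^{4H} φ_H(cos θ, sin θ)} dr`; the substitution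
`s = φ_H(cos θ, sin θ) r^{4H}` turns it into an incomplete gamma integral. That substitution
needs `φ_H(cos θ, sin θ) > 0`: by Heron's formula `φ_H(u, v)` is `4 · area²` of the triangle
with sides `u^H`, `v^H`, `|u - v|^H`, which is nondegenerate by strict subadditivity of `t ↦ t^H`.
-/

open MeasureTheory Set Real

/-- `φ_H(u,v) := u^{2H} v^{2H} - (1/4)(u^{2H} + v^{2H} - |u-v|^{2H})²`. -/
noncomputable def phi (H u v : ℝ) : ℝ :=
  u ^ (2 * H) * v ^ (2 * H) - 1/4 * (u ^ (2 * H) + v ^ (2 * H) - |u - v| ^ (2 * H)) ^ 2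

/-- The lower incomplete gamma function `γ(α, x) = ∫₀^x e^{-y} y^{α-1} dy`. -/
noncomputable def lowerGamma (α x : ℝ) : ℝ := ∫ y in Ioo (0:ℝ) x, Real.exp (-y) * y ^ (α - 1)

open scoped ENNReal

theorem Real.rpow_add_lt_add_rpow {p a b : ℝ} (ha : 0 < a) (hb : 0 < b) (hp : p < 1) :
    (a + b) ^ p < a ^ p + b ^ p := by
  have hab : 0 < a + b := add_pos ha hb
  have hlt : ∀ x : ℝ, 0 < x → x < a + b → x * (a + b) ^ (p - 1) < x ^ p := fun x hx hxab => by
    calc x * (a + b) ^ (p - 1) < x * x ^ (p - 1) :=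
          mul_lt_mul_of_pos_left (rpow_lt_rpow_of_neg hx hxab (by linarith)) hx
      _ = x ^ p := by rw [rpow_sub_one hx.ne', mul_div_cancel₀ _ hx.ne']
  calc (a + b) ^ p = a * (a + b) ^ (p - 1) + b * (a + b) ^ (p - 1) := by
        rw [← add_mul, rpow_sub_one hab.ne', mul_div_cancel₀ _ hab.ne']
    _ < a ^ p + b ^ p := add_lt_add (hlt a ha (by linarith)) (hlt b hb (by linarith))

theorem phi_eq_heron {H u v : ℝ} (hu : 0 ≤ u) (hv : 0 ≤ v) :
    phi H u v = 1 / 4 * (((|u - v| ^ H) ^ 2 - (u ^ H - v ^ H) ^ 2) *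
      ((u ^ H + v ^ H) ^ 2 - (|u - v| ^ H) ^ 2)) := by
  have hsq : ∀ {w : ℝ}, 0 ≤ w → w ^ (2 * H) = (w ^ H) ^ 2 := fun hw => by
    rw [mul_comm, rpow_mul hw, rpow_two]
  rw [phi, hsq hu, hsq hv, hsq (abs_nonneg _)]
  ring

theorem phi_pos {H u v : ℝ} (hH0 : 0 < H) (hH1 : H < 1) (hv : 0 < v) (hvu : v < u) :
    0 < phi H u v := by
  have huv : 0 < u - v := sub_pos.2 hvu
  have hB : v ^ H < u ^ H := rpow_lt_rpow hv.le hvu hH0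
  have hD : (u - v) ^ H < u ^ H := rpow_lt_rpow huv.le (by linarith) hH0
  have hA : u ^ H < (u - v) ^ H + v ^ H := by
    simpa using rpow_add_lt_add_rpow huv hv hH1
  have hB0 : 0 < v ^ H := rpow_pos_of_pos hv H
  have hD0 : 0 < (u - v) ^ H := rpow_pos_of_pos huv H
  rw [phi_eq_heron (hv.trans hvu).le hv.le, abs_of_pos huv]
  exact mul_pos (by norm_num) (mul_pos (by nlinarith) (by nlinarith))

theorem phi_cos_sin_pos {H θ : ℝ} (hH0 : 0 < H) (hH1 : H < 1) (hθ : θ ∈ Ioo 0 (π / 4)) :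
    0 < phi H (cos θ) (sin θ) := by
  obtain ⟨hθ0, hθ1⟩ := hθ
  refine phi_pos hH0 hH1 (sin_pos_of_pos_of_lt_pi hθ0 (by linarith [pi_pos])) ?_
  rw [← cos_pi_div_two_sub]
  exact cos_lt_cos_of_nonneg_of_le_pi hθ0.le (by linarith [pi_pos]) (by linarith)

theorem phi_mul_mul (H : ℝ) {r u v : ℝ} (hr : 0 < r) (hu : 0 ≤ u) (hv : 0 ≤ v) :
    phi H (r * u) (r * v) = r ^ (4 * H) * phi H u v := by
  have hr4 : r ^ (4 * H) = r ^ (2 * H) * r ^ (2 * H) := by rw [← rpow_add hr]; ring_nf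
  rw [phi, phi, ← mul_sub, abs_mul, abs_of_pos hr, mul_rpow hr.le hu, mul_rpow hr.le hv,
    mul_rpow hr.le (abs_nonneg _), hr4]
  ring

theorem measurable_phi (H : ℝ) : Measurable fun p : ℝ × ℝ => phi H p.1 p.2 := by
  unfold phi
  fun_prop

theorem ofReal_lowerGamma {α : ℝ} (hα : 0 < α) (x : ℝ) :
    ENNReal.ofReal (lowerGamma α x) =
      ∫⁻ y in Ioo 0 x, ENNReal.ofReal (exp (-y) * y ^ (α - 1)) :=
  ofReal_integral_eq_lintegral_ofReal
    ((GammaIntegral_convergent hα).mono_set Ioo_subset_Ioi_self)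
    ((ae_restrict_iff' measurableSet_Ioo).2 <| ae_of_all _ fun _ hy =>
      mul_nonneg (exp_pos _).le (rpow_nonneg hy.1.le _))

theorem lintegral_Ioo_rpow_mul_exp_neg_mul_rpow {p q c T : ℝ} (hp : 0 < p) (hq : -1 < q)
    (hc : 0 < c) (hT : 0 ≤ T) :
    ∫⁻ r in Ioo 0 T, ENNReal.ofReal (r ^ q * exp (-(c * r ^ p))) =
      ENNReal.ofReal (c ^ (-((q + 1) / p)) * (1 / p) * lowerGamma ((q + 1) / p) (c * T ^ p)) := by
  set s := (q + 1) / p with hs_def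
  have hs : 0 < s := div_pos (by linarith) hp
  set g : ℝ → ℝ := fun r => c * r ^ p
  have hg_mono : StrictMonoOn g (Icc 0 T) := fun x hx _ _ hxy =>
    mul_lt_mul_of_pos_left (rpow_lt_rpow hx.1 hxy hp) hc
  have hg_image : g '' Ioo 0 T = Ioo 0 (c * T ^ p) := by
    rw [ContinuousOn.image_Ioo_of_strictMonoOn (f := g) hT
      (continuous_const.mul (continuous_rpow_const hp.le)).continuousOn hg_mono]
    simp [g, zero_rpow hp.ne']
  have hg_deriv : ∀ r ∈ Ioo 0 T, HasDerivWithinAt g (c * (p * r ^ (p - 1))) (Ioo 0 T) r :=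
    fun r hr => ((hasDerivAt_rpow_const (Or.inl hr.1.ne')).const_mul c).hasDerivWithinAt
  have hjacobian : ∀ r ∈ Ioo 0 T, |c * (p * r ^ (p - 1))| *
      (c ^ (-s) * (1 / p) * (exp (-g r) * g r ^ (s - 1))) = r ^ q * exp (-(c * r ^ p)) := by
    intro r hr
    have hr0 : 0 < r := hr.1
    have hc_pow : c * c ^ (-s) * c ^ (s - 1) = 1 := by
      rw [mul_assoc, ← rpow_add hc, show -s + (s - 1) = -1 by ring, rpow_neg_one,
        mul_inv_cancel₀ hc.ne']
    have hr_pow : r ^ (p - 1) * r ^ (p * (s - 1)) = r ^ q := by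
      rw [← rpow_add hr0]
      congr 1
      rw [hs_def]
      field_simp
      ring
    rw [abs_of_pos (by positivity), mul_rpow hc.le (rpow_nonneg hr0.le p), ← rpow_mul hr0.le]
    calc _ = (c * c ^ (-s) * c ^ (s - 1)) * (p * (1 / p)) * (r ^ (p - 1) * r ^ (p * (s - 1)))
          * exp (-g r) := by ring
      _ = _ := by rw [hc_pow, hr_pow, mul_one_div_cancel hp.ne']; ring
  calc ∫⁻ r in Ioo 0 T, ENNReal.ofReal (r ^ q * exp (-(c * r ^ p)))
      = ∫⁻ r in Ioo 0 T, ENNReal.ofReal |c * (p * r ^ (p - 1))| *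
          (ENNReal.ofReal (c ^ (-s) * (1 / p)) * ENNReal.ofReal (exp (-g r) * g r ^ (s - 1))) :=
        setLIntegral_congr_fun measurableSet_Ioo fun r hr => by
          rw [← ENNReal.ofReal_mul (by positivity), ← ENNReal.ofReal_mul (abs_nonneg _),
            hjacobian r hr]
    _ = ∫⁻ y in g '' Ioo 0 T,
          ENNReal.ofReal (c ^ (-s) * (1 / p)) * ENNReal.ofReal (exp (-y) * y ^ (s - 1)) :=
        (lintegral_image_eq_lintegral_abs_deriv_mul measurableSet_Ioo hg_deriv
          (hg_mono.mono Ioo_subset_Icc_self).injOn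
          fun y => ENNReal.ofReal (c ^ (-s) * (1 / p)) *
            ENNReal.ofReal (exp (-y) * y ^ (s - 1))).symm
    _ = ENNReal.ofReal (c ^ (-s) * (1 / p)) * ENNReal.ofReal (lowerGamma s (c * T ^ p)) := by
        rw [hg_image, lintegral_const_mul' _ _ ENNReal.ofReal_ne_top, ofReal_lowerGamma hs]
    _ = _ := (ENNReal.ofReal_mul (by positivity)).symm

theorem lintegral_lintegral_Ioc_eq_setLIntegral {f : ℝ × ℝ → ℝ≥0∞} (hf : Measurable f)
    (s : Set ℝ) (a : ℝ) :
    ∫⁻ x in s, ∫⁻ y in Ioc a x, f (x, y) =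
      ∫⁻ p in {p : ℝ × ℝ | p.1 ∈ s ∧ p.2 ∈ Ioc a p.1}, f p := by
  set V := {p : ℝ × ℝ | p.2 ∈ Ioc a p.1}
  have hV : MeasurableSet V :=
    (measurableSet_lt measurable_const measurable_snd).inter
      (measurableSet_le measurable_snd measurable_fst)
  calc ∫⁻ x in s, ∫⁻ y in Ioc a x, f (x, y) = ∫⁻ x in s, ∫⁻ y, V.indicator f (x, y) := by
        refine lintegral_congr fun x => ?_
        rw [← lintegral_indicator measurableSet_Ioc]
        rfl
    _ = ∫⁻ p in s ×ˢ univ, V.indicator f p := by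
        rw [Measure.volume_eq_prod, setLIntegral_prod _ (hf.indicator hV).aemeasurable]
        simp only [Measure.restrict_univ]
    _ = ∫⁻ p in s ×ˢ univ ∩ V, f p := by
        rw [lintegral_indicator hV, Measure.restrict_restrict hV, inter_comm]
    _ = _ := by rw [prod_univ]; rfl

theorem triangle_subset_image_polarCoord_symm (R : ℝ) :
    {p : ℝ × ℝ | p.1 ∈ Ioc 0 R ∧ p.2 ∈ Ioc 0 p.1} ⊆
      polarCoord.symm '' (Ioc 0 (√2 * R) ×ˢ Ioc 0 (π / 4)) := by
  rintro ⟨x, y⟩ ⟨⟨hx, hxR⟩, hy, hyx⟩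
  set t := y / x
  have ht : 0 < t := div_pos hy hx
  have ht1 : t ≤ 1 := (div_le_one hx).2 hyx
  have hcos : 0 < cos (arctan t) := cos_arctan_pos t
  refine ⟨(x / cos (arctan t), arctan t), ⟨⟨div_pos hx hcos, ?_⟩, arctan_pos.2 ht, ?_⟩, ?_⟩
  · calc x / cos (arctan t) = x * √(1 + t ^ 2) := by rw [cos_arctan, div_div_eq_mul_div, div_one]
      _ ≤ R * √2 := mul_le_mul hxR (sqrt_le_sqrt (by nlinarith)) (sqrt_nonneg _) (hx.le.trans hxR)
      _ = √2 * R := mul_comm _ _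
  · rw [← arctan_one]
    exact arctan_strictMono.monotone ht1
  · rw [polarCoord_symm_apply, div_mul_cancel₀ x hcos.ne', div_mul_eq_mul_div, mul_div_assoc,
      ← tan_eq_sin_div_cos, tan_arctan, mul_div_cancel₀ _ hx.ne']

theorem lintegral_triangle_le_lintegral_polar {f : ℝ × ℝ → ℝ≥0∞} (hf : Measurable f) (R : ℝ) :
    ∫⁻ x in Ioc 0 R, ∫⁻ y in Ioc 0 x, f (x, y) ≤
      ∫⁻ θ in Ioo 0 (π / 4), ∫⁻ r in Ioo 0 (√2 * R),
        ENNReal.ofReal r * f (r * cos θ, r * sin θ) := by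
  set S := Ioc 0 (√2 * R) ×ˢ Ioc (0 : ℝ) (π / 4)
  have hS : MeasurableSet S := measurableSet_Ioc.prod measurableSet_Ioc
  have hS_target : S ⊆ polarCoord.target := prod_mono Ioc_subset_Ioi_self
    fun θ hθ => ⟨by linarith [pi_pos, hθ.1], by linarith [pi_pos, hθ.2]⟩
  calc ∫⁻ x in Ioc 0 R, ∫⁻ y in Ioc 0 x, f (x, y)
      = ∫⁻ p in {p : ℝ × ℝ | p.1 ∈ Ioc 0 R ∧ p.2 ∈ Ioc 0 p.1}, f p :=
        lintegral_lintegral_Ioc_eq_setLIntegral hf (Ioc 0 R) 0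
    _ ≤ ∫⁻ p in polarCoord.symm '' S, f p :=
        lintegral_mono_set (triangle_subset_image_polarCoord_symm R)
    _ = ∫⁻ q in S, ENNReal.ofReal q.1 * f (polarCoord.symm q) := by
        rw [lintegral_image_eq_lintegral_abs_det_fderiv_mul volume hS
          (fun q _ => (hasFDerivAt_polarCoord_symm q).hasFDerivWithinAt)
          (polarCoord.symm.injOn.mono hS_target)]
        refine setLIntegral_congr_fun hS fun q hq => ?_
        rw [det_fderivPolarCoordSymm, abs_of_pos hq.1.1]
    _ = ∫⁻ θ in Ioc 0 (π / 4), ∫⁻ r in Ioc 0 (√2 * R),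
          ENNReal.ofReal r * f (r * cos θ, r * sin θ) :=
        setLIntegral_prod_symm _ (by fun_prop)
    _ = _ := by
        simp only [setLIntegral_congr (Ioo_ae_eq_Ioc (μ := volume))]

theorem lintegral_Ioo_mul_exp_neg_phi {H R θ : ℝ} (hH0 : 0 < H) (hH1 : H < 1) (hR : 0 ≤ R)
    (hθ : θ ∈ Ioo 0 (π / 4)) :
    ∫⁻ r in Ioo 0 (√2 * R),
        ENNReal.ofReal r * ENNReal.ofReal (exp (-phi H (r * cos θ) (r * sin θ))) =
      ENNReal.ofReal (1 / (4 * H)) * ENNReal.ofReal (phi H (cos θ) (sin θ) ^ (-(1 / (2 * H))) *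
        lowerGamma (1 / (2 * H)) (2 ^ (2 * H) * R ^ (4 * H) * phi H (cos θ) (sin θ))) := by
  set c := phi H (cos θ) (sin θ)
  have hc : 0 < c := phi_cos_sin_pos hH0 hH1 hθ
  have hcos : 0 ≤ cos θ :=
    cos_nonneg_of_mem_Icc ⟨by linarith [pi_pos, hθ.1], by linarith [pi_pos, hθ.2]⟩
  have hsin : 0 ≤ sin θ := sin_nonneg_of_nonneg_of_le_pi hθ.1.le (by linarith [pi_pos, hθ.2])
  have hs : ((1 : ℝ) + 1) / (4 * H) = 1 / (2 * H) := by field_simp; ring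
  have hT : (√2 * R) ^ (4 * H) = 2 ^ (2 * H) * R ^ (4 * H) := by
    rw [mul_rpow (sqrt_nonneg 2) hR, sqrt_eq_rpow, ← rpow_mul (by norm_num)]
    ring_nf
  calc _ = ∫⁻ r in Ioo 0 (√2 * R), ENNReal.ofReal (r ^ (1 : ℝ) * exp (-(c * r ^ (4 * H)))) :=
        setLIntegral_congr_fun measurableSet_Ioo fun r hr => by
          rw [← ENNReal.ofReal_mul hr.1.le, rpow_one, phi_mul_mul H hr.1 hcos hsin, mul_comm c]
    _ = _ := by
        rw [lintegral_Ioo_rpow_mul_exp_neg_mul_rpow (by positivity) (by norm_num) hc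
          (by positivity), hs, hT, ← ENNReal.ofReal_mul (by positivity)]
        ring_nf

/-- For `H ∈ (0,1)` and `R > 0`,
`∫₀^R dx ∫₀^x dy e^{-φ_H(x,y)} ≤ (1/(4H)) ∫₀^{π/4} φ_H(cos θ, sin θ)^{-1/(2H)}
  γ(1/(2H), 2^{2H} R^{4H} φ_H(cos θ, sin θ)) dθ`. -/
theorem polar_bound (H R : ℝ) (hH : H ∈ Ioo (0:ℝ) 1) (hR : 0 < R) :
    (∫⁻ x in Ioc (0:ℝ) R, ∫⁻ y in Ioc (0:ℝ) x, ENNReal.ofReal (Real.exp (-phi H x y))) ≤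
      ENNReal.ofReal (1 / (4 * H)) *
        ∫⁻ θ in Ioo (0:ℝ) (π / 4),
          ENNReal.ofReal ((phi H (Real.cos θ) (Real.sin θ)) ^ (-(1 / (2 * H))) *
            lowerGamma (1 / (2 * H))
              ((2:ℝ) ^ (2 * H) * R ^ (4 * H) * phi H (Real.cos θ) (Real.sin θ))) := by
  obtain ⟨hH0, hH1⟩ := hH
  calc _ ≤ ∫⁻ θ in Ioo 0 (π / 4), ∫⁻ r in Ioo 0 (√2 * R),
          ENNReal.ofReal r * ENNReal.ofReal (exp (-phi H (r * cos θ) (r * sin θ))) :=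
        lintegral_triangle_le_lintegral_polar (f := fun p => ENNReal.ofReal (exp (-phi H p.1 p.2)))
          (measurable_phi H).neg.exp.ennreal_ofReal R
    _ = _ := by
        rw [← lintegral_const_mul' _ _ ENNReal.ofReal_ne_top]
        exact setLIntegral_congr_fun measurableSet_Ioo fun θ hθ =>
          lintegral_Ioo_mul_exp_neg_phi hH0 hH1 hR.le hθ
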